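/- Let H be a self-adjoint n×n matrix and U a positive semidefinite n×n matrix, and let f: ℝ → ℝ be continuously differentiable with bounded derivative. Then ∫_δ^{1-δ} Tr(U f'(H + t U)) dt = Tr(f(H + (1-δ)U)) - Tr(f(H + δU)) for any 0 ≤ δ ≤ 1/2. -/

import Mathlib

/-- Functional calculus for a (real symmetric) matrix, extended by `0` to all matrices. -/
noncomputable def matFun {n : ℕ} (f : ℝ → ℝ) (A : Matrix (Fin n) (Fin n) ℝ) :
    Matrix (Fin n) (Fin n) ℝ :=
  if h : A.IsHermitian then h.cfc f else 0

/-!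
For a polynomial `p`, cyclicity of the trace gives `d/dt Tr p(H + tU) = Tr(U p'(H + tU))`.
On a bounded range of `t` the spectra of `H + tU` stay in a fixed compact interval, on which a
`C¹` function `f` is the `C¹`-limit of polynomials (antiderivatives of Weierstrass approximations
of `f'`). Because `|Tr(W g(A))| ≤ Tr W · sup_{σ(A)} |g|` for `W ⪰ 0`, both `Tr p(H + tU)` and
`Tr(U p'(H + tU))` then converge uniformly in `t`, so the derivative formula passes to `f`, and the
identity is the fundamental theorem of calculus along the segment `t ↦ H + tU`.
-/

open Polynomial Set Filter Topology Matrix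

theorem Polynomial.derivative_surjective {K : Type*} [Field K] [CharZero K] :
    Function.Surjective (derivative : K[X] → K[X]) := by
  intro q
  induction q using Polynomial.induction_on' with
  | add p q hp hq =>
    obtain ⟨P, rfl⟩ := hp
    obtain ⟨Q, rfl⟩ := hq
    exact ⟨P + Q, derivative_add⟩
  | monomial k a =>
    refine ⟨monomial (k + 1) (a / (k + 1)), ?_⟩
    rw [derivative_monomial, add_tsub_cancel_right, Nat.cast_add_one,
      div_mul_cancel₀ _ (Nat.cast_add_one_ne_zero k)]

theorem exists_polynomial_near_of_contDiff {f : ℝ → ℝ} (hf : ContDiff ℝ 1 f) (a b : ℝ)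
    {ε : ℝ} (hε : 0 < ε) :
    ∃ p : ℝ[X], ∀ x ∈ Icc a b, |p.eval x - f x| < ε ∧ |p.derivative.eval x - deriv f x| < ε := by
  rcases lt_or_ge b a with hba | hab
  · exact ⟨0, fun x hx => absurd (hx.1.trans hx.2) (not_le.2 hba)⟩
  have hε' : 0 < ε / (b - a + 1) := div_pos hε (by linarith)
  obtain ⟨q, hq⟩ := exists_polynomial_near_of_continuousOn a b (deriv f)
    (hf.continuous_deriv le_rfl).continuousOn _ hε'
  obtain ⟨P, rfl⟩ := derivative_surjective q
  set p := P + C (f a - P.eval a)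
  have hp : p.derivative = P.derivative := by simp [p]
  have hpa : p.eval a - f a = 0 := by simp [p]
  have hmvt := norm_image_sub_le_of_norm_deriv_le_segment' (f := fun x => p.eval x - f x)
    (fun x _ =>
      ((p.hasDerivAt x).sub (hf.differentiable one_ne_zero x).hasDerivAt).hasDerivWithinAt)
    (fun x hx => by rw [hp, Real.norm_eq_abs]; exact (hq x (Ico_subset_Icc_self hx)).le)
  refine ⟨p, fun x hx => ⟨?_, ?_⟩⟩
  · have h := hmvt x hx
    rw [hpa, sub_zero, Real.norm_eq_abs] at h
    calc |p.eval x - f x| ≤ ε / (b - a + 1) * (x - a) := h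
      _ ≤ ε / (b - a + 1) * (b - a) := by gcongr; exact hx.2
      _ < ε / (b - a + 1) * (b - a + 1) := by gcongr; linarith
      _ = ε := div_mul_cancel₀ _ (by linarith)
  · rw [hp]
    calc _ < ε / (b - a + 1) := hq x hx
      _ ≤ ε := div_le_self hε.le (by linarith)

theorem exists_polynomial_tendstoUniformlyOn_of_contDiff {f : ℝ → ℝ} (hf : ContDiff ℝ 1 f)
    (a b : ℝ) :
    ∃ p : ℝ → ℝ[X], TendstoUniformlyOn (fun ε x => (p ε).eval x) f (𝓝[>] 0) (Icc a b) ∧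
      TendstoUniformlyOn (fun ε x => (p ε).derivative.eval x) (deriv f) (𝓝[>] 0) (Icc a b) := by
  choose! p hp using fun ε (hε : 0 < ε) => exists_polynomial_near_of_contDiff hf a b hε
  refine ⟨p, ?_, ?_⟩ <;> refine Metric.tendstoUniformlyOn_iff.2 fun δ hδ => ?_ <;>
    filter_upwards [Ioo_mem_nhdsGT hδ] with ε hε x hx <;> rw [dist_comm, Real.dist_eq]
  exacts [(hp ε hε.1 x hx).1.trans hε.2, (hp ε hε.1 x hx).2.trans hε.2]

namespace Matrix

variable {m : Type*} [Fintype m] [DecidableEq m] {A W : Matrix m m ℝ}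

theorem IsHermitian.trace_mul_cfc (hA : A.IsHermitian) (W : Matrix m m ℝ) (g : ℝ → ℝ) :
    (W * cfc g A).trace = ∑ i, (star (hA.eigenvectorUnitary : Matrix m m ℝ) * W *
      hA.eigenvectorUnitary) i i * g (hA.eigenvalues i) := by
  rw [hA.cfc_eq, IsHermitian.cfc, Unitary.conjStarAlgAut_apply, ← mul_assoc, ← mul_assoc,
    trace_mul_comm, ← mul_assoc, ← mul_assoc]
  simp only [trace, diag_apply, mul_diagonal, Function.comp_apply]
  rfl

theorem IsHermitian.abs_trace_mul_cfc_sub_le (hA : A.IsHermitian) (hW : W.PosSemidef)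
    {g h : ℝ → ℝ} {ε : ℝ} (hgh : ∀ x ∈ spectrum ℝ A, |g x - h x| ≤ ε) :
    |(W * cfc g A).trace - (W * cfc h A).trace| ≤ W.trace * ε := by
  set V : Matrix m m ℝ := (hA.eigenvectorUnitary : Matrix m m ℝ)
  have hVW : (star V * W * V).PosSemidef := by
    simpa [star_eq_conjTranspose] using hW.conjTranspose_mul_mul_same V
  have htr : (star V * W * V).trace = W.trace := by
    rw [trace_mul_comm, ← mul_assoc, Unitary.mul_star_self_of_mem hA.eigenvectorUnitary.2, one_mul]
  rw [hA.trace_mul_cfc, hA.trace_mul_cfc, ← Finset.sum_sub_distrib, ← htr, trace, Finset.sum_mul]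
  refine (Finset.abs_sum_le_sum_abs _ _).trans (Finset.sum_le_sum fun i _ => ?_)
  rw [← mul_sub, abs_mul, abs_of_nonneg (hVW.diag_nonneg)]
  exact mul_le_mul_of_nonneg_left (hgh _ (hA.eigenvalues_mem_spectrum_real i)) hVW.diag_nonneg

theorem _root_.TendstoUniformlyOn.trace_mul_cfc {ι X : Type*} {l : Filter ι} {F : ι → ℝ → ℝ}
    {g : ℝ → ℝ} {K : Set ℝ} (hF : TendstoUniformlyOn F g l K) (hW : W.PosSemidef)
    {A : X → Matrix m m ℝ} {S : Set X} (hA : ∀ x ∈ S, (A x).IsHermitian)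
    (hAK : ∀ x ∈ S, spectrum ℝ (A x) ⊆ K) :
    TendstoUniformlyOn (fun i x => (W * cfc (F i) (A x)).trace)
      (fun x => (W * cfc g (A x)).trace) l S := by
  rw [Metric.tendstoUniformlyOn_iff] at hF ⊢
  intro ε hε
  have hW₁ : 0 < W.trace + 1 := by linarith [hW.trace_nonneg]
  filter_upwards [hF (ε / (W.trace + 1)) (div_pos hε hW₁)] with i hi x hx
  calc dist _ _ ≤ W.trace * (ε / (W.trace + 1)) :=
        (hA x hx).abs_trace_mul_cfc_sub_le hW fun y hy => (hi y (hAK x hx hy)).le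
    _ < (W.trace + 1) * (ε / (W.trace + 1)) := by gcongr; linarith
    _ = ε := mul_div_cancel₀ _ hW₁.ne'

attribute [local instance] Matrix.linftyOpNormedAddCommGroup Matrix.linftyOpNormedRing
  Matrix.linftyOpNormedAlgebra in
theorem _root_.IsCompact.exists_spectrum_subset_Icc {X : Type*} [TopologicalSpace X] {K : Set X}
    (hK : IsCompact K) {A : X → Matrix m m ℝ} (hA : ContinuousOn A K) :
    ∃ R, ∀ x ∈ K, spectrum ℝ (A x) ⊆ Icc (-R) R := by
  -- the `L∞` operator norm induces the product topology only up to unfolding instances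
  obtain ⟨C, hC⟩ := hK.exists_bound_of_continuousOn (f := A) (by exact hA)
  refine ⟨C * ‖(1 : Matrix m m ℝ)‖, fun x hx y hy => abs_le.1 ?_⟩
  calc |y| ≤ ‖A x‖ * ‖(1 : Matrix m m ℝ)‖ := spectrum.norm_le_norm_mul_of_mem hy
    _ ≤ C * ‖(1 : Matrix m m ℝ)‖ := by gcongr; exact hC x hx

theorem trace_sum_pow_mul_mul_pow {R : Type*} [CommRing R] (A U : Matrix m m R) (k : ℕ) :
    (∑ i ∈ Finset.range k, A ^ (k.pred - i) * U * A ^ i).trace = k * (U * A ^ k.pred).trace := by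
  rw [trace_sum, Finset.sum_congr rfl (g := fun _ => (U * A ^ k.pred).trace) fun i hi => ?_,
    Finset.sum_const, Finset.card_range, nsmul_eq_mul]
  rw [trace_mul_cycle, ← pow_add, Nat.add_sub_cancel' (Nat.le_pred_of_lt (Finset.mem_range.1 hi)),
    trace_mul_comm]

attribute [local instance] Matrix.linftyOpNormedAddCommGroup Matrix.linftyOpNormedRing
  Matrix.linftyOpNormedAlgebra in
theorem hasDerivAt_trace_aeval_add_smul {𝕜 : Type*} [RCLike 𝕜] (H U : Matrix m m 𝕜) (p : 𝕜[X])
    (t : 𝕜) :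
    HasDerivAt (fun s => (aeval (H + s • U) p).trace)
      ((U * aeval (H + t • U) (derivative p)).trace) t := by
  induction p using Polynomial.induction_on' with
  | add p q hp hq => simpa [mul_add] using hp.fun_add hq
  | monomial k a =>
    have hpow : HasDerivAt (fun s => ((H + s • U) ^ k).trace)
        (∑ i ∈ Finset.range k, (H + t • U) ^ (k.pred - i) * U * (H + t • U) ^ i).trace t := by
      have hline := ((hasDerivAt_id t).smul_const U).const_add H
      rw [one_smul] at hline
      exact (traceLinearMap m 𝕜 𝕜).toContinuousLinearMap.hasFDerivAt.comp_hasDerivAt t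
        (hline.fun_pow' k)
    rw [trace_sum_pow_mul_mul_pow, Nat.pred_eq_sub_one] at hpow
    simp only [aeval_monomial, derivative_monomial, Algebra.algebraMap_eq_smul_one, smul_mul_assoc,
      one_mul, mul_smul_comm, trace_smul, smul_eq_mul]
    exact (hpow.const_mul a).congr_deriv (by ring)

end Matrix

theorem matFun_eq_cfc {n : ℕ} (f : ℝ → ℝ) (A : Matrix (Fin n) (Fin n) ℝ) :
    matFun f A = cfc f A := by
  unfold matFun
  split_ifs with hA
  · exact (hA.cfc_eq f).symm
  · exact (cfc_apply_of_not_predicate A hA).symm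

section LineSegment

variable {m : Type*} [Fintype m] [DecidableEq m] {H U : Matrix m m ℝ} {f : ℝ → ℝ}

theorem exists_polynomial_tendstoUniformlyOn_trace_aeval_add_smul (hH : H.IsHermitian)
    (hU : U.PosSemidef) (hf : ContDiff ℝ 1 f) (a b : ℝ) :
    ∃ p : ℝ → ℝ[X],
      TendstoUniformlyOn (fun ε t => (aeval (H + t • U) (p ε)).trace)
        (fun t => (cfc f (H + t • U)).trace) (𝓝[>] 0) (Icc a b) ∧
      TendstoUniformlyOn (fun ε t => (U * aeval (H + t • U) (derivative (p ε))).trace)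
        (fun t => (U * cfc (deriv f) (H + t • U)).trace) (𝓝[>] 0) (Icc a b) := by
  have hA (t : ℝ) : (H + t • U).IsHermitian := hH.add (hU.isHermitian.smul (.all t))
  obtain ⟨R, hR⟩ := isCompact_Icc.exists_spectrum_subset_Icc (A := fun t : ℝ => H + t • U)
    (by fun_prop : Continuous fun t : ℝ => H + t • U).continuousOn
  obtain ⟨p, hp, hp'⟩ := exists_polynomial_tendstoUniformlyOn_of_contDiff hf (-R) R
  have haeval (q : ℝ[X]) (t : ℝ) : aeval (H + t • U) q = cfc q.eval (H + t • U) :=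
    (cfc_polynomial q _ (hA t).isSelfAdjoint).symm
  simp only [haeval]
  refine ⟨p, ?_, hp'.trace_mul_cfc hU (fun t _ => hA t) hR⟩
  simpa only [one_mul] using hp.trace_mul_cfc PosSemidef.one (fun t _ => hA t) hR

theorem hasDerivAt_trace_cfc_add_smul (hH : H.IsHermitian) (hU : U.PosSemidef)
    (hf : ContDiff ℝ 1 f) (t : ℝ) :
    HasDerivAt (fun s => (cfc f (H + s • U)).trace) ((U * cfc (deriv f) (H + t • U)).trace) t := by
  obtain ⟨p, hp, hp'⟩ :=
    exists_polynomial_tendstoUniformlyOn_trace_aeval_add_smul hH hU hf (t - 1) (t + 1)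
  exact hasDerivAt_of_tendstoUniformlyOn isOpen_Ioo (hp'.mono Ioo_subset_Icc_self)
    (Eventually.of_forall fun ε s _ => hasDerivAt_trace_aeval_add_smul H U (p ε) s)
    (fun s hs => hp.tendsto_at (Ioo_subset_Icc_self hs)) ⟨by linarith, by linarith⟩

theorem continuous_trace_mul_cfc_deriv_add_smul (hH : H.IsHermitian) (hU : U.PosSemidef)
    (hf : ContDiff ℝ 1 f) : Continuous fun t : ℝ => (U * cfc (deriv f) (H + t • U)).trace := by
  refine continuous_iff_continuousAt.2 fun t => ?_
  obtain ⟨p, -, hp'⟩ :=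
    exists_polynomial_tendstoUniformlyOn_trace_aeval_add_smul hH hU hf (t - 1) (t + 1)
  refine ((hp'.mono Ioo_subset_Icc_self).continuousOn (Frequently.of_forall fun ε => ?_))
    |>.continuousAt (Ioo_mem_nhds (by linarith) (by linarith))
  fun_prop

theorem integral_trace_mul_cfc_deriv_add_smul (hH : H.IsHermitian) (hU : U.PosSemidef)
    (hf : ContDiff ℝ 1 f) (a b : ℝ) :
    ∫ t in a..b, (U * cfc (deriv f) (H + t • U)).trace
      = (cfc f (H + b • U)).trace - (cfc f (H + a • U)).trace :=
  intervalIntegral.integral_eq_sub_of_hasDerivAt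
    (fun t _ => hasDerivAt_trace_cfc_add_smul hH hU hf t)
    ((continuous_trace_mul_cfc_deriv_add_smul hH hU hf).intervalIntegrable a b)

end LineSegment

theorem birman_solomyak_general (n : ℕ) (H U : Matrix (Fin n) (Fin n) ℝ)
    (hH : H.IsHermitian) (hU : U.PosSemidef) (f : ℝ → ℝ) (hf : ContDiff ℝ 1 f)
    (δ : ℝ) :
    ∫ t in δ..(1 - δ), (U * matFun (deriv f) (H + t • U)).trace
      = (matFun f (H + (1 - δ) • U)).trace - (matFun f (H + δ • U)).trace := by
  simp only [matFun_eq_cfc]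
  exact integral_trace_mul_cfc_deriv_add_smul hH hU hf δ (1 - δ)

/-- The Birman–Solomyak formula in the finite-dimensional setting:
`∫_δ^{1-δ} Tr(U f'(H + tU)) dt = Tr f(H + (1-δ)U) - Tr f(H + δU)`. -/
theorem birman_solomyak (n : ℕ) (H U : Matrix (Fin n) (Fin n) ℝ)
    (hH : H.IsHermitian) (hU : U.PosSemidef) (f : ℝ → ℝ) (hf : ContDiff ℝ 1 f)
    (hf' : ∃ M : ℝ, ∀ x, |deriv f x| ≤ M) (δ : ℝ) (hδ0 : 0 ≤ δ) (hδ1 : δ ≤ 1 / 2) :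
    ∫ t in δ..(1 - δ), (U * matFun (deriv f) (H + t • U)).trace
      = (matFun f (H + (1 - δ) • U)).trace - (matFun f (H + δ • U)).trace :=
  birman_solomyak_general n H U hH hU f hf δ
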